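/- If T is a positive semidefinite matrix, A is a matrix with operator norm ‖A‖ ≤ 1, and TA = A†T with TA ≥ 0 (positive semidefinite), then TA ≤ T in the Loewner order. -/

import Mathlib

/-! Since `TA = A†T`, we have `(TA)² = T (AA†) T ≤ T²` because `AA† ≤ 1`; both `TA` and `T` are
positive, so operator monotonicity of the square root gives `TA ≤ T`. This works verbatim in any
C⋆-algebra, and matrices with the `ℓ²` operator norm form one. -/

open Matrix BigOperators
open scoped ComplexOrder Classical

noncomputable def msqrt {n : Type*} [Fintype n] [DecidableEq n]
    (A : Matrix n n ℂ) : Matrix n n ℂ :=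
  if h : A.PosSemidef then
    (h.1.eigenvectorUnitary : Matrix n n ℂ) * diagonal ((↑) ∘ (√·) ∘ h.1.eigenvalues) *
      (star h.1.eigenvectorUnitary : Matrix n n ℂ)
  else 0

noncomputable def gm {n : Type*} [Fintype n] [DecidableEq n]
    (A B : Matrix n n ℂ) : Matrix n n ℂ :=
  msqrt A * msqrt ((msqrt A)⁻¹ * B * (msqrt A)⁻¹) * msqrt A

def IsDensity {n : Type*} [Fintype n] (ρ : Matrix n n ℂ) : Prop :=
  ρ.PosSemidef ∧ ρ.trace = 1

structure IsReverseTest {d m : ℕ} (ρ σ : Matrix (Fin d) (Fin d) ℂ)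
    (R : Fin m → Matrix (Fin d) (Fin d) ℂ) (p q : Fin m → ℝ) : Prop where
  states : ∀ x, IsDensity (R x)
  p_nonneg : ∀ x, 0 ≤ p x
  q_nonneg : ∀ x, 0 ≤ q x
  p_sum : ∑ x, p x = 1
  q_sum : ∑ x, q x = 1
  rho_eq : ∑ x, (p x : ℂ) • R x = ρ
  sigma_eq : ∑ x, (q x : ℂ) • R x = σ

noncomputable def Fmin {d : ℕ} (ρ σ : Matrix (Fin d) (Fin d) ℂ) : ℝ :=
  sSup {r : ℝ | ∃ (m : ℕ) (R : Fin m → Matrix (Fin d) (Fin d) ℂ) (p q : Fin m → ℝ),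
    IsReverseTest ρ σ R p q ∧ r = ∑ x, Real.sqrt (p x * q x)}

noncomputable def Dmax {d : ℕ} (ρ σ : Matrix (Fin d) (Fin d) ℂ) : ℝ :=
  sInf {r : ℝ | ∃ (m : ℕ) (R : Fin m → Matrix (Fin d) (Fin d) ℂ) (p q : Fin m → ℝ),
    IsReverseTest ρ σ R p q ∧ r = (∑ x, |p x - q x|) / 2}

noncomputable def choiMatrix {d e : ℕ}
    (Λ : Matrix (Fin d) (Fin d) ℂ →ₗ[ℂ] Matrix (Fin e) (Fin e) ℂ) :
    Matrix (Fin d × Fin e) (Fin d × Fin e) ℂ :=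
  Matrix.of fun pr qr => Λ (Matrix.single pr.1 qr.1 1) pr.2 qr.2

def IsCPTP {d e : ℕ}
    (Λ : Matrix (Fin d) (Fin d) ℂ →ₗ[ℂ] Matrix (Fin e) (Fin e) ℂ) : Prop :=
  (choiMatrix Λ).PosSemidef ∧ ∀ A, (Λ A).trace = A.trace

noncomputable def mcfc {n : Type*} [Fintype n] [DecidableEq n]
    (f : ℝ → ℝ) (A : Matrix n n ℂ) : Matrix n n ℂ :=
  if h : A.IsHermitian then h.cfc f else 0

def IsOperatorMonotoneOnNonneg (f : ℝ → ℝ) : Prop :=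
  ∀ (d : ℕ) (A B : Matrix (Fin d) (Fin d) ℂ), A.PosSemidef → B.PosSemidef →
    (B - A).PosSemidef → (mcfc f B - mcfc f A).PosSemidef

noncomputable def traceNorm {n : Type*} [Fintype n] [DecidableEq n]
    (A : Matrix n n ℂ) : ℝ :=
  ((msqrt (Aᴴ * A)).trace).re

namespace CStarAlgebra

variable {A : Type*} [CStarAlgebra A] [PartialOrder A] [StarOrderedRing A]

lemma le_of_mul_self_le_mul_self {a b : A} (ha : 0 ≤ a) (hb : 0 ≤ b) (h : a * a ≤ b * b) :
    a ≤ b := by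
  simpa only [CFC.sqrt_mul_self a ha, CFC.sqrt_mul_self b hb] using CFC.sqrt_le_sqrt _ _ h

lemma mul_star_self_le_one_of_norm_le_one {a : A} (ha : ‖a‖ ≤ 1) : a * star a ≤ 1 := by
  rw [← norm_le_one_iff_of_nonneg _ (mul_star_self_nonneg a), CStarRing.norm_self_mul_star]
  nlinarith [norm_nonneg a]

theorem mul_le_self_of_norm_le_one {t a : A} (ht : 0 ≤ t) (ha : ‖a‖ ≤ 1)
    (hcomm : t * a = star a * t) (hta : 0 ≤ t * a) : t * a ≤ t := by
  refine le_of_mul_self_le_mul_self hta ht ?_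
  calc t * a * (t * a) = t * a * (star a * t) := by rw [← hcomm]
    _ = t * (a * star a) * t := by simp only [mul_assoc]
    _ ≤ t * 1 * t := conjugate_le_conjugate_of_nonneg (mul_star_self_le_one_of_norm_le_one ha) ht
    _ = t * t := by rw [mul_one]

end CStarAlgebra

open scoped Matrix.Norms.L2Operator MatrixOrder

theorem stmt1 {d : ℕ} (T A : Matrix (Fin d) (Fin d) ℂ)
    (hT : T.PosSemidef) (hA : ‖Matrix.toEuclideanCLM (𝕜 := ℂ) A‖ ≤ 1)
    (hcomm : T * A = Aᴴ * T) (hTA : (T * A).PosSemidef) :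
    (T - T * A).PosSemidef :=
  CStarAlgebra.mul_le_self_of_norm_le_one hT.nonneg hA hcomm hTA.nonneg
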